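/- arXiv:2201.12009 — 6 statements merged into one kernel-verified Lean document; each statement's English description precedes it below -/
import Mathlib

section
/- For i ≥ 2, with d = 2i-s-1 and g = 2i-2, one has the identity 2·∑_{s=0}^{i-2} 4·a(2i-1-s, 2i-2) = 8·C(2i-2, i), where a(d,g) = (2d-g-1)·g!/(d!·(g-d+1)!). -/
open Finset

/-- `a(d,g) = (2d-g-1)·g!/(d!·(g-d+1)!)` as a rational number. -/
noncomputable def aPencil (d g : ℕ) : ℚ :=
  ((2 * d : ℚ) - g - 1) * Nat.factorial g /
    (Nat.factorial d * Nat.factorial (g - d + 1))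

/-! The pencil numbers are consecutive differences of binomial coefficients, so every sum of
them along a range of degrees telescopes. -/

lemma aPencil_succ_eq (k g : ℕ) (hk : k ≤ g) :
    aPencil (k + 1) g = (2 * k + 1 - g) * g.choose k / (k + 1) := by
  have hfac : (g.choose k : ℚ) * k.factorial * (g - k).factorial = g.factorial := by
    exact_mod_cast Nat.choose_mul_factorial_mul_factorial hk
  have hfac_compl : (g - (k + 1) + 1).factorial = (g - k).factorial := by
    rcases hk.lt_or_eq with hlt | rfl
    · congr 1; omega
    · simp
  rw [aPencil, hfac_compl, Nat.factorial_succ, ← hfac]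
  have hk0 : (k.factorial : ℚ) ≠ 0 := by positivity
  have hgk0 : ((g - k).factorial : ℚ) ≠ 0 := by positivity
  push_cast
  field_simp
  ring

lemma choose_sub_choose_succ (k g : ℕ) (hk : k ≤ g) :
    (g.choose k : ℚ) - g.choose (k + 1) = (2 * k + 1 - g) * g.choose k / (k + 1) := by
  have hsucc : (g.choose (k + 1) : ℚ) * (k + 1) = g.choose k * ((g - k : ℕ) : ℚ) := by
    exact_mod_cast Nat.choose_succ_right_eq g k
  rw [Nat.cast_sub hk] at hsucc
  field_simp
  linear_combination -hsucc

lemma aPencil_succ_eq_choose_sub_choose (k g : ℕ) (hk : k ≤ g) :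
    aPencil (k + 1) g = (g.choose k : ℚ) - g.choose (k + 1) := by
  rw [aPencil_succ_eq k g hk, choose_sub_choose_succ k g hk]

lemma sum_range_aPencil (g n : ℕ) (hn : n ≤ g + 1) :
    ∑ s ∈ range n, aPencil (g + 1 - s) g = (g.choose (g + 1 - n) : ℚ) := by
  induction n with
  | zero => simp
  | succ n ih =>
    rw [sum_range_succ, ih (by omega), show g + 1 - n = (g - n) + 1 by omega,
      aPencil_succ_eq_choose_sub_choose _ _ (Nat.sub_le g n),
      show g + 1 - (n + 1) = g - n by omega]
    ring

theorem sum_a_caseI (i : ℕ) (hi : 2 ≤ i) :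
    2 * ∑ s ∈ Finset.range (i - 1), 4 * aPencil (2 * i - 1 - s) (2 * i - 2)
      = 8 * ((2 * i - 2).choose i : ℚ) := by
  have hterm : ∀ s, 2 * i - 1 - s = (2 * i - 2) + 1 - s := fun s => by omega
  have hsum := sum_range_aPencil (2 * i - 2) (i - 1) (by omega)
  rw [show 2 * i - 2 + 1 - (i - 1) = i by omega] at hsum
  simp_rw [← mul_sum, hterm, hsum]
  ring
end

section
/- For i ≥ 2, the identity ∑_{s=0}^{i-1} 2·e(2i-s, 2i-2) = 16(3i-2)·C(2i-2, i) holds, where e(d,g) = 8·g!/((d-3)!·(g-d+2)!) - 8·g!/(d!·(g-d-1)!). -/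
/-!
For `d ≥ 3`, `e(d, n + 1) = 8 (n + 1) (C(n, d - 3) - C(n, d))`, so the sum telescopes with
step three and leaves `16 (2i - 2)` times the three central binomial coefficients of row
`2i - 3 = 2m + 1`; Pascal's rule and `C(2m+1, m+2) (m+2) = C(2m+1, m+1) m` turn these into
`C(2i - 2, i)`.
-/

open Finset

/-- `e(d,g) = 8·g!/((d-3)!·(g-d+2)!) - 8·g!/(d!·(g-d-1)!)` as a rational number,
where a term is interpreted as `0` if a factorial argument would be negative. -/
noncomputable def ePencil (d g : ℕ) : ℚ :=
  (if 3 ≤ d ∧ d ≤ g + 2 then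
      8 * (Nat.factorial g : ℚ) /
        (Nat.factorial (d - 3) * Nat.factorial (g + 2 - d))
    else 0)
  - (if d + 1 ≤ g then
      8 * (Nat.factorial g : ℚ) /
        (Nat.factorial d * Nat.factorial (g - d - 1))
    else 0)

open Nat in
theorem factorial_succ_div_factorial_mul_factorial {K : Type*} [Field K] [CharZero K] (a b : ℕ) :
    ((a + b + 1)! : K) / (a ! * b !) = (a + b + 1) * (a + b).choose a := by
  rw [Nat.cast_choose K (Nat.le_add_right a b), Nat.add_sub_cancel_left, Nat.factorial_succ]
  push_cast
  ring

theorem ePencil_succ (n d : ℕ) (hd : 3 ≤ d) :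
    ePencil d (n + 1) = 8 * (n + 1) * ((n.choose (d - 3) : ℚ) - n.choose d) := by
  have lower : (if 3 ≤ d ∧ d ≤ n + 1 + 2 then
      8 * ((n + 1).factorial : ℚ) / ((d - 3).factorial * (n + 1 + 2 - d).factorial) else 0)
      = 8 * (n + 1) * n.choose (d - 3) := by
    split_ifs with h
    · obtain ⟨b, rfl⟩ : ∃ b, n = d - 3 + b := ⟨n - (d - 3), by omega⟩
      rw [show d - 3 + b + 1 + 2 - d = b by omega, mul_div_assoc,
        factorial_succ_div_factorial_mul_factorial]
      push_cast
      ring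
    · rw [Nat.choose_eq_zero_of_lt (by omega)]
      simp
  have upper : (if d + 1 ≤ n + 1 then
      8 * ((n + 1).factorial : ℚ) / (d.factorial * (n + 1 - d - 1).factorial) else 0)
      = 8 * (n + 1) * n.choose d := by
    split_ifs with h
    · obtain ⟨b, rfl⟩ : ∃ b, n = d + b := ⟨n - d, by omega⟩
      rw [show d + b + 1 - d - 1 = b by omega, mul_div_assoc,
        factorial_succ_div_factorial_mul_factorial]
      push_cast
      ring
    · rw [Nat.choose_eq_zero_of_lt (by omega)]
      simp
  rw [ePencil, lower, upper]
  ring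

theorem Finset.sum_range_sub_shift {G : Type*} [AddCommGroup G] (f : ℕ → G) (k N : ℕ) :
    ∑ s ∈ range N, (f (s + k) - f s) =
      ∑ j ∈ range k, f (N + j) - ∑ j ∈ range k, f j := by
  have split_right := sum_range_add f N k
  have split_left := sum_range_add f k N
  simp only [add_comm k] at split_left
  rw [sum_sub_distrib, sub_eq_sub_iff_add_eq_add, add_comm, ← split_left, split_right, add_comm]

theorem succ_mul_sum_central_choose (m : ℕ) :
    (2 * m + 2) * ((2 * m + 1).choose m + (2 * m + 1).choose (m + 1) + (2 * m + 1).choose (m + 2))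
      = (3 * m + 4) * (2 * m + 2).choose (m + 2) := by
  have hsymm := Nat.choose_symm_half m
  have hpascal := Nat.choose_succ_succ (2 * m + 1) (m + 1)
  have hratio := Nat.choose_succ_right_eq (2 * m + 1) (m + 1)
  rw [show 2 * m + 1 - (m + 1) = m by omega] at hratio
  rw [hpascal, hsymm]
  nlinarith

theorem sum_e_caseII (i : ℕ) (hi : 2 ≤ i) :
    ∑ s ∈ Finset.range i, 2 * ePencil (2 * i - s) (2 * i - 2)
      = 16 * (3 * (i : ℚ) - 2) * ((2 * i - 2).choose i : ℚ) := by
  obtain ⟨m, rfl⟩ : ∃ m, i = m + 2 := ⟨i - 2, by omega⟩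
  set a : ℕ → ℚ := fun s => ((2 * m + 1).choose (2 * m + 4 - s) : ℚ)
  have term (s : ℕ) (hs : s ∈ range (m + 2)) :
      2 * ePencil (2 * (m + 2) - s) (2 * (m + 2) - 2) = 16 * (2 * m + 2) * (a (s + 3) - a s) := by
    rw [mem_range] at hs
    rw [show 2 * (m + 2) - 2 = 2 * m + 1 + 1 by omega, ePencil_succ _ _ (by omega)]
    simp only [a]
    rw [show 2 * (m + 2) - s - 3 = 2 * m + 1 - s by omega,
      show 2 * (m + 2) - s = 2 * m + 4 - s by omega]
    push_cast
    ring
  have outside (j : ℕ) (hj : j < 3) : a j = 0 := by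
    simp only [a, Nat.choose_eq_zero_of_lt (show 2 * m + 1 < 2 * m + 4 - j by omega), Nat.cast_zero]
  rw [sum_congr rfl term, ← mul_sum, sum_range_sub_shift]
  simp only [sum_range_succ, sum_range_zero, outside 0 (by norm_num), outside 1 (by norm_num),
    outside 2 (by norm_num), a]
  rw [show 2 * m + 4 - (m + 2 + 0) = m + 2 by omega, show 2 * m + 4 - (m + 2 + 1) = m + 1 by omega,
    show 2 * m + 4 - (m + 2 + 2) = m by omega, show 2 * (m + 2) - 2 = 2 * m + 2 by omega]
  have key := congrArg (Nat.cast : ℕ → ℚ) (succ_mul_sum_central_choose m)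
  push_cast at key ⊢
  linear_combination 16 * key
end

section
/- For i ≥ 2, the identity 8·∑_{s=1}^{i-2} (4i-4s-1)·C(2i-2, s-1) = 4(4i-3)·C(2i-2, i-1) - 24·C(2i-2, i) - 2^{2i} holds. -/
/-!
Put `n = 2i - 2` and shift `t = s - 1`. The coefficient `4i - 4s - 1` equals `2(n - 2t) - 1`,
and `(n - 2t) C(n, t) = (t + 1) C(n, t + 1) - t C(n, t)` telescopes, so the left-hand side is
`16 (i - 2) C(n, i - 2)` minus eight times a partial row sum of binomial coefficients. By symmetry
of the even row `n`, that partial sum is `(2^n - C(n, i - 1)) / 2 - C(n, i - 2)`. The identity then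
follows from `C(n, i - 2) = C(n, i)` and `i C(n, i) = (i - 1) C(n, i - 1)`.
-/

open Finset

namespace Nat

theorem cast_succ_mul_choose_succ {R : Type*} [CommRing R] (n t : ℕ) :
    ((t : R) + 1) * n.choose (t + 1) = ((n : R) - t) * n.choose t := by
  rcases le_or_gt t n with htn | hnt
  · have h := congrArg (Nat.cast : ℕ → R) (choose_succ_right_eq n t)
    push_cast [Nat.cast_sub htn] at h
    linear_combination h
  · simp [choose_eq_zero_of_lt hnt, choose_eq_zero_of_lt (hnt.trans (lt_add_one t))]

theorem sum_range_sub_two_mul_mul_choose {R : Type*} [CommRing R] (n k : ℕ) :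
    ∑ t ∈ range k, ((n : R) - 2 * t) * n.choose t = k * n.choose k := by
  have hstep : ∀ t ∈ range k, ((n : R) - 2 * t) * n.choose t
      = ((t + 1 : ℕ) : R) * n.choose (t + 1) - (t : R) * n.choose t := by
    intro t _
    push_cast
    linear_combination -(cast_succ_mul_choose_succ (R := R) n t)
  rw [sum_congr rfl hstep, sum_range_sub (fun t => (t : R) * n.choose t)]
  simp

theorem two_mul_sum_range_choose_add_choose_middle (m : ℕ) :
    2 * ∑ t ∈ range m, (2 * m).choose t + (2 * m).choose m = 4 ^ m := by
  have hreflect : ∑ t ∈ range m, (2 * m).choose t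
      = ∑ t ∈ Ico (m + 1) (2 * m + 1), (2 * m).choose t := by
    rw [← sum_congr rfl fun t ht => choose_symm (n := 2 * m) (by linarith [mem_range.1 ht]),
      range_eq_Ico, sum_Ico_reflect _ _ (by lia), show 2 * m + 1 - m = m + 1 by lia, Nat.sub_zero]
  calc 2 * ∑ t ∈ range m, (2 * m).choose t + (2 * m).choose m
      = ∑ t ∈ range (m + 1), (2 * m).choose t
          + ∑ t ∈ Ico (m + 1) (2 * m + 1), (2 * m).choose t := by
        rw [sum_range_succ, two_mul, hreflect]; ring
    _ = ∑ t ∈ range (2 * m + 1), (2 * m).choose t := sum_range_add_sum_Ico _ (by lia)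
    _ = 4 ^ m := by rw [sum_range_choose, pow_mul]; rfl

end Nat

theorem prymunram_caseI (i : ℕ) (hi : 2 ≤ i) :
    8 * ∑ s ∈ Finset.Icc 1 (i - 2),
        ((4 * (i : ℚ) - 4 * s - 1) * ((2 * i - 2).choose (s - 1) : ℚ))
      = 4 * (4 * (i : ℚ) - 3) * ((2 * i - 2).choose (i - 1) : ℚ)
        - 24 * ((2 * i - 2).choose i : ℚ) - 2 ^ (2 * i) := by
  obtain ⟨k, rfl⟩ : ∃ k, i = k + 2 := ⟨i - 2, by omega⟩
  set n := 2 * (k + 1) with hn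
  rw [show 2 * (k + 2) - 2 = n by omega, show k + 2 - 2 = k by omega,
    show k + 2 - 1 = k + 1 by omega]
  have hshift : ∑ s ∈ Icc 1 k, ((4 * ((k + 2 : ℕ) : ℚ) - 4 * s - 1) * (n.choose (s - 1) : ℚ))
      = ∑ t ∈ range k, (2 * ((n : ℚ) - 2 * t) - 1) * n.choose t := by
    rw [← Ico_add_one_right_eq_Icc, sum_Ico_eq_sum_range]
    refine sum_congr (by simp) fun t _ => ?_
    simp only [Nat.add_sub_cancel_left, hn]
    push_cast
    ring
  have hsum : ∑ t ∈ range k, (2 * ((n : ℚ) - 2 * t) - 1) * n.choose t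
      = 2 * k * n.choose k - ∑ t ∈ range k, (n.choose t : ℚ) := by
    rw [mul_assoc, ← Nat.sum_range_sub_two_mul_mul_choose, mul_sum, ← sum_sub_distrib]
    exact sum_congr rfl fun t _ => by ring
  have hhalf : 2 * (∑ t ∈ range k, (n.choose t : ℚ) + n.choose k) + n.choose (k + 1)
      = 4 ^ (k + 1) := by
    rw [← sum_range_succ]
    exact_mod_cast Nat.two_mul_sum_range_choose_add_choose_middle (k + 1)
  have hsymm : n.choose (k + 2) = n.choose k := Nat.choose_symm_of_eq_add (by omega)
  have hratio := Nat.cast_succ_mul_choose_succ (R := ℚ) n k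
  have hpow : (2 : ℚ) ^ (2 * (k + 2)) = 4 * 4 ^ (k + 1) := by rw [pow_mul]; ring
  rw [hshift, hsum, hsymm, hpow]
  push_cast [hn] at hratio ⊢
  linear_combination -4 * hhalf - 16 * hratio
end

section
/- For i ≥ 2, the identity (2/(2i-1))·∑_{s=0}^{i-2} (4i-4s-2)(2i-2s-1)·C(2i-1, s) = 2^{2i} - (4/(2i-1))·C(2i-1, i) holds in the rationals. -/
/-!
With `n = 2i - 1` the summand is `2 (n - 2s)² C(n, s)`. Since `(s + 1) C(n, s + 1) = (n - s) C(n, s)`,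
`(n - 2s)² C(n, s) - n C(n, s)` is the difference `f(s + 1) - f(s)` of `f(s) = s (n + 1 - 2s) C(n, s)`,
so the sum telescopes to `n ∑_{s < i - 1} C(n, s) + 2 (i - 1) C(n, i - 1)`. The remaining sum of
binomial coefficients is half of `2ⁿ` minus the middle term `C(n, i - 1) = C(n, i)`.
-/

open Finset

section

variable {R : Type*} [CommRing R]

theorem Nat.cast_choose_succ_mul (n k : ℕ) :
    (n.choose (k + 1) : R) * (k + 1) = n.choose k * ((n : R) - k) := by
  rcases le_or_gt k n with hkn | hnk
  · have h := congrArg (Nat.cast : ℕ → R) (Nat.choose_succ_right_eq n k)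
    push_cast [hkn] at h
    exact h
  · rw [Nat.choose_eq_zero_of_lt hnk, Nat.choose_eq_zero_of_lt (by omega)]
    simp

theorem sum_range_sub_two_mul_sq_mul_choose (n m : ℕ) :
    ∑ s ∈ range m, ((n : R) - 2 * s) ^ 2 * n.choose s
      = n * ∑ s ∈ range m, (n.choose s : R) + m * ((n : R) + 1 - 2 * m) * n.choose m := by
  induction m with
  | zero => simp
  | succ m ih =>
    rw [sum_range_succ, sum_range_succ, ih]
    push_cast
    linear_combination (2 * (m : R) + 1 - n) * Nat.cast_choose_succ_mul (R := R) n m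

theorem sum_range_choose_two_mul_add_one (m : ℕ) :
    ∑ s ∈ range m, ((2 * m + 1).choose s : R) = 4 ^ m - (2 * m + 1).choose m := by
  have halfway : ∑ s ∈ range (m + 1), ((2 * m + 1).choose s : R) = 4 ^ m := by
    exact_mod_cast congrArg (Nat.cast : ℕ → R) (Nat.sum_range_choose_halfway m)
  rw [sum_range_succ] at halfway
  exact eq_sub_of_add_eq halfway

theorem sum_range_sub_two_mul_sq_mul_choose_two_mul_add_one (m : ℕ) :
    ∑ s ∈ range m, ((2 * m + 1 : ℕ) - 2 * (s : R)) ^ 2 * (2 * m + 1).choose s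
      = (2 * m + 1 : R) * 4 ^ m - ((2 * m + 1).choose m : R) := by
  rw [sum_range_sub_two_mul_sq_mul_choose, sum_range_choose_two_mul_add_one]
  push_cast
  ring

end

theorem prymunram_caseII (i : ℕ) (hi : 2 ≤ i) :
    (2 / (2 * (i : ℚ) - 1)) * ∑ s ∈ Finset.range (i - 1),
        ((4 * (i : ℚ) - 4 * s - 2) * (2 * (i : ℚ) - 2 * s - 1)
          * ((2 * i - 1).choose s : ℚ))
      = 2 ^ (2 * i) - (4 / (2 * (i : ℚ) - 1)) * ((2 * i - 1).choose i : ℚ) := by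
  obtain ⟨m, rfl⟩ : ∃ m, i = m + 1 := ⟨i - 1, by omega⟩
  rw [show 2 * (m + 1) - 1 = 2 * m + 1 by omega, Nat.add_sub_cancel, Nat.choose_symm_half,
    pow_mul]
  have summand (s : ℕ) :
      (4 * ((m + 1 : ℕ) : ℚ) - 4 * s - 2) * (2 * ((m + 1 : ℕ) : ℚ) - 2 * s - 1)
        = 2 * (((2 * m + 1 : ℕ) : ℚ) - 2 * s) ^ 2 := by
    push_cast; ring
  simp_rw [summand, mul_assoc, ← mul_sum, sum_range_sub_two_mul_sq_mul_choose_two_mul_add_one]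
  have hn : 2 * ((m + 1 : ℕ) : ℚ) - 1 ≠ 0 := by
    push_cast
    linarith [(m.cast_nonneg : (0 : ℚ) ≤ m)]
  field_simp
  push_cast
  norm_num
  ring
end

section
/- For i ≥ 1, the identity ∑_{s=0}^{i-1} (2i-2s-1)(2i-2s+1)(i-s-1)·C(2i-1, s) = (i - 1/2)·2^{2i-2} + (2i² - (5/2)i)·C(2i-1, i) holds in the rationals. -/
/-!
Writing `i = n + 1`, the summand equals `(n + 1/2) C(2n+1, s) + F(s+1) - F(s)` for the
Gosper-type antidifference `F(s) = s (2s² - (4n+5)s + 2n² + 7n + 5/2) C(2n+1, s)`, which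
follows from `C(m, s+1) (s+1) = C(m, s) (m - s)`. The sum therefore telescopes to `F(n+1)`
plus `(n + 1/2)` times `∑_{s ≤ n} C(2n+1, s) = 4ⁿ`, half of the full row by symmetry.
-/

open Finset

/-- `Nat.choose_succ_right_eq` without truncated subtraction: for `k > n` both sides vanish. -/
theorem Nat.cast_choose_succ_right_mul {R : Type*} [CommRing R] (n k : ℕ) :
    (n.choose (k + 1) : R) * (k + 1) = n.choose k * (n - k) := by
  rcases le_or_gt k n with hkn | hnk
  · exact_mod_cast congrArg (Nat.cast : ℕ → R) (Nat.choose_succ_right_eq n k)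
  · simp [Nat.choose_eq_zero_of_lt hnk, Nat.choose_eq_zero_of_lt (Nat.lt_succ_of_lt hnk)]

def caseIAntidiff (n s : ℕ) : ℚ :=
  s * (2 * s ^ 2 - (4 * n + 5) * s + 2 * n ^ 2 + 7 * n + 5 / 2) * (2 * n + 1).choose s

theorem caseI_summand_eq (n s : ℕ) :
    (2 * ((n + 1 : ℕ) : ℚ) - 2 * s - 1) * (2 * ((n + 1 : ℕ) : ℚ) - 2 * s + 1)
        * (((n + 1 : ℕ) : ℚ) - s - 1) * ((2 * n + 1).choose s : ℚ)
      = (n + 1 / 2) * (2 * n + 1).choose s + (caseIAntidiff n (s + 1) - caseIAntidiff n s) := by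
  have hstep := Nat.cast_choose_succ_right_mul (R := ℚ) (2 * n + 1) s
  apply mul_left_cancel₀ (by positivity : (s : ℚ) + 1 ≠ 0)
  unfold caseIAntidiff
  push_cast at hstep ⊢
  linear_combination
    -((s + 1) * (2 * (s + 1) ^ 2 - (4 * n + 5) * (s + 1) + 2 * n ^ 2 + 7 * n + 5 / 2)) * hstep

theorem caseI_identity1 (i : ℕ) (hi : 1 ≤ i) :
    ∑ s ∈ Finset.range i,
        ((2 * (i : ℚ) - 2 * s - 1) * (2 * (i : ℚ) - 2 * s + 1)
          * ((i : ℚ) - s - 1) * ((2 * i - 1).choose s : ℚ))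
      = ((i : ℚ) - 1 / 2) * 2 ^ (2 * i - 2)
        + (2 * (i : ℚ) ^ 2 - (5 / 2) * i) * ((2 * i - 1).choose i : ℚ) := by
  obtain ⟨n, rfl⟩ := Nat.exists_eq_add_of_le' hi
  have hodd : 2 * (n + 1) - 1 = 2 * n + 1 := by omega
  have heven : 2 * (n + 1) - 2 = 2 * n := by omega
  have hhalfway : ∑ s ∈ range (n + 1), ((2 * n + 1).choose s : ℚ) = 2 ^ (2 * n) := by
    rw [pow_mul]
    exact_mod_cast Nat.sum_range_choose_halfway n
  simp only [hodd, heven, caseI_summand_eq, sum_add_distrib, ← mul_sum, hhalfway,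
    sum_range_sub (caseIAntidiff n)]
  simp only [caseIAntidiff]
  push_cast
  ring
end

section
/- For i ≥ 1, the identity ∑_{s=0}^{i-1} s·(2i-2s)(2i-2s-1)(2i-2s+1)·C(2i-1, s) = (4i³ - 9i² + 5i)·C(2i-1, i) holds. -/
/-!
Writing `n = 2i - 1`, the summand `s (n+1-2s)(n-2s)(n+2-2s) C(n,s)` is the forward difference of
`F(s) = s (s-1) ((n+2-2s)^2 + 2n - 4) C(n,s)`: the factor `s` of `F(s+1)` absorbs the `s + 1` in
`C(n,s+1) (s+1) = C(n,s) (n-s)`. So the sum telescopes to `F(i)`, and `F(i) = i (i-1) (4i-5) C(2i-1,i)`.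
-/

open Finset

variable {R : Type*} [CommRing R]

theorem sum_range_mul_choose_telescope (n m : ℕ) :
    ∑ s ∈ range m, (s : R) * (n + 1 - 2 * s) * (n - 2 * s) * (n + 2 - 2 * s) * n.choose s
      = m * (m - 1) * ((n + 2 - 2 * m) ^ 2 + 2 * n - 4) * n.choose m := by
  induction m with
  | zero => simp
  | succ m ih =>
    rw [sum_range_succ, ih]
    have hrec := Nat.cast_choose_succ_mul (R := R) n m
    push_cast
    linear_combination (-(m : R) * ((n - 2 * m) ^ 2 + 2 * n - 4)) * hrec

theorem caseI_identity4 (i : ℕ) (hi : 1 ≤ i) :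
    ∑ s ∈ Finset.range i,
        ((s : ℚ) * (2 * (i : ℚ) - 2 * s) * (2 * (i : ℚ) - 2 * s - 1)
          * (2 * (i : ℚ) - 2 * s + 1) * ((2 * i - 1).choose s : ℚ))
      = (4 * (i : ℚ) ^ 3 - 9 * (i : ℚ) ^ 2 + 5 * i) * ((2 * i - 1).choose i : ℚ) := by
  have hn : ((2 * i - 1 : ℕ) : ℚ) = 2 * i - 1 := by
    push_cast [Nat.cast_sub (by omega : 1 ≤ 2 * i)]
    ring
  have h := sum_range_mul_choose_telescope (R := ℚ) (2 * i - 1) i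
  rw [hn] at h
  convert h using 2 <;> ring
end
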